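/- arXiv:2005.02081 — 2 statements merged into one kernel-verified Lean document; each statement's English description precedes it below -/
import Mathlib

section
/- For every rational number x and every integer n ≥ 0, G_n(x) = Σ_{k=0}^{n} C(x,k)^2 (−1)^{n−k} C(−1−x, n−k). -/
/-
After `(-1)^k C(-1-x,k) = C(x+k,k)`, both sides expand by Chu–Vandermonde into the double sum
`Σ_{k ≤ m ≤ n} C(n,m) C(m,k) C(x,m) C(x,k)`: on the left via `C(x+m,m) = Σ_k C(m,k) C(x,k)`, on the
right via `C(x-k+n, n-k) = Σ_j C(x-k,j) C(n,k+j)` together with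
`C(x,k) C(x-k,j) = C(k+j,k) C(x,k+j)`. This holds in any commutative binomial ring.
-/

open Finset

/-- Generalized binomial coefficient `C(x,k) = x(x-1)⋯(x-k+1)/k!` for rational `x`. -/
def qchoose (x : ℚ) (k : ℕ) : ℚ := (∏ i ∈ range k, (x - i)) / (Nat.factorial k)

/-- `r` is a `p`-integer: the denominator of `r` (in lowest terms) is not divisible by `p`. -/
def IsPInt (p : ℕ) (r : ℚ) : Prop := ¬ (p ∣ r.den)

/-- `a ≡ b (mod p^k)` for rationals: `(a - b)/p^k` is a `p`-integer. -/
def RatCong (p k : ℕ) (a b : ℚ) : Prop := IsPInt p ((a - b) / (p : ℚ) ^ k)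

/-- The Apéry-like sequence `G_n(x)`. -/
def G (n : ℕ) (x : ℚ) : ℚ :=
  ∑ k ∈ range (n + 1), (n.choose k : ℚ) * (-1) ^ k * qchoose x k * qchoose (-1 - x) k

/-- The Apéry-like sequence `V_n(x)`. -/
def V (n : ℕ) (x : ℚ) : ℚ :=
  ∑ k ∈ range (n + 1),
    (n.choose k : ℚ) * ((n + k).choose k : ℚ) * (-1) ^ k * qchoose x k * qchoose (-1 - x) k

def Gn (n : ℕ) : ℚ := 16 ^ n * G n (-1/2)
def G3 (n : ℕ) : ℚ := 27 ^ n * G n (-1/3)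
def G4 (n : ℕ) : ℚ := 64 ^ n * G n (-1/4)
def G6 (n : ℕ) : ℚ := 432 ^ n * G n (-1/6)

def Vn (n : ℕ) : ℚ := 16 ^ n * V n (-1/2)
def V3 (n : ℕ) : ℚ := 27 ^ n * V n (-1/3)
def V4 (n : ℕ) : ℚ := 64 ^ n * V n (-1/4)
def V6 (n : ℕ) : ℚ := 432 ^ n * V n (-1/6)

/-- Euler numbers: `E_0 = 1`, `E_{2n-1} = 0`, `E_{2n} = -∑_{k=1}^n C(2n,2k) E_{2n-2k}`. -/
def eulerE : ℕ → ℚ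
  | 0 => 1
  | (n + 1) =>
    if (n + 1) % 2 = 1 then 0
    else -∑ k ∈ range ((n + 1) / 2),
        ((n + 1).choose (2 * (k + 1)) : ℚ) * eulerE (n + 1 - 2 * (k + 1))
decreasing_by omega

/-- The sequence `U_n`: `U_0 = 1`, `U_{2n-1} = 0`, `U_{2n} = -2∑_{k=1}^n C(2n,2k) U_{2n-2k}`. -/
def seqU : ℕ → ℚ
  | 0 => 1
  | (n + 1) =>
    if (n + 1) % 2 = 1 then 0
    else -2 * ∑ k ∈ range ((n + 1) / 2),
        ((n + 1).choose (2 * (k + 1)) : ℚ) * seqU (n + 1 - 2 * (k + 1))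
decreasing_by omega

/-- The sequence `s_n`: `s_0 = 1`, `s_n = 1 - ∑_{k=0}^{n-1} C(n,k) 2^{2n-1-2k} s_k`. -/
def seqS : ℕ → ℚ
  | 0 => 1
  | (n + 1) => 1 - ∑ k ∈ (range (n + 1)).attach,
      ((n + 1).choose k.1 : ℚ) * 2 ^ (2 * (n + 1) - 1 - 2 * k.1) * seqS k.1
decreasing_by exact mem_range.mp k.2

/-- Euler polynomials `E_n(x) = 2^{-n} ∑_{k=0}^n C(n,k) (2x-1)^{n-k} E_k`. -/
def eulerPoly (n : ℕ) (x : ℚ) : ℚ :=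
  (∑ k ∈ range (n + 1), (n.choose k : ℚ) * (2 * x - 1) ^ (n - k) * eulerE k) / 2 ^ n

/-- Harmonic numbers `H_n`. -/
def harm (n : ℕ) : ℚ := ∑ k ∈ range n, 1 / ((k : ℚ) + 1)

/-- Legendre/Jacobi symbol of a rational number whose denominator is coprime to `p`. -/
def qLegendre (r : ℚ) (p : ℕ) : ℤ := jacobiSym (r.num * r.den) p

/-- `(B_{p²(p-1)}(-x) - B_{p²(p-1)})/(p²(p-1))`. -/
noncomputable def bratio (p : ℕ) (x : ℚ) : ℚ :=
  ((Polynomial.bernoulli (p ^ 2 * (p - 1))).eval (-x) - bernoulli (p ^ 2 * (p - 1))) /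
    ((p : ℚ) ^ 2 * ((p : ℚ) - 1))

/-- Franel numbers. -/
def franel (n : ℕ) : ℚ := ∑ k ∈ range (n + 1), (n.choose k : ℚ) ^ 3

def aseq (n : ℕ) : ℚ := ∑ k ∈ range (n + 1), (n.choose k : ℚ) ^ 2 * ((2 * k).choose k : ℚ)

def Qseq (n : ℕ) : ℚ := ∑ k ∈ range (n + 1), (n.choose k : ℚ) * (-8) ^ (n - k) * franel k

theorem qchoose_eq_ringChoose (x : ℚ) (k : ℕ) : qchoose x k = Ring.choose x k := by
  rw [Ring.choose_eq_smul, ← Polynomial.aeval_eq_smeval, Polynomial.aeval_def,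
    ← Polynomial.eval_map, descPochhammer_map, descPochhammer_eval_eq_prod_range,
    qchoose, smul_eq_mul, div_eq_inv_mul]

section BinomialRing
variable {R : Type*} [CommRing R] [BinomialRing R]

theorem Ring.neg_one_pow_mul_choose_neg_one_sub (r : R) (k : ℕ) :
    (-1) ^ k * Ring.choose (-1 - r) k = Ring.choose (r + k) k := by
  rw [show -1 - r = -(r + 1) by ring, Ring.choose_neg, add_sub_right_comm, add_sub_cancel_right,
    Units.smul_def, Int.negOnePow_def, zsmul_eq_mul, ← mul_assoc]
  simp [← mul_pow]

theorem Ring.choose_add_natCast (r : R) (n l : ℕ) :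
    Ring.choose (r + n) l = ∑ i ∈ range (l + 1), Ring.choose r i * n.choose (l - i) := by
  rw [Ring.add_choose_eq l (Commute.all _ _), Nat.sum_antidiagonal_eq_sum_range_succ
    (fun i j => Ring.choose r i * Ring.choose (n : R) j)]
  simp only [Ring.choose_natCast]

theorem Ring.choose_add_natCast_self {r : R} {m N : ℕ} (h : m < N) :
    Ring.choose (r + m) m = ∑ k ∈ range N, (m.choose k : R) * Ring.choose r k := by
  rw [Ring.choose_add_natCast]
  refine sum_subset_zero_on_sdiff (range_subset_range.2 h) (fun k hk => ?_) (fun k hk => ?_)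
  · rw [mem_sdiff, mem_range, mem_range] at hk
    simp [Nat.choose_eq_zero_of_lt (by omega : m < k)]
  · rw [Nat.choose_symm (Nat.lt_succ_iff.1 (mem_range.1 hk)), mul_comm]

theorem Ring.choose_mul_choose_add_natCast_sub {r : R} {k n : ℕ} (h : k ≤ n) :
    Ring.choose r k * Ring.choose (r + (n - k : ℕ)) (n - k) =
      ∑ m ∈ range (n + 1), (n.choose m : R) * m.choose k * Ring.choose r m := by
  have hr : r + (n - k : ℕ) = (r - k) + n := by rw [Nat.cast_sub h]; ring
  rw [hr, Ring.choose_add_natCast, mul_sum, show n + 1 = k + (n - k + 1) by omega,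
    sum_range_add _ k]
  have hlow : ∑ m ∈ range k, (n.choose m : R) * m.choose k * Ring.choose r m = 0 :=
    sum_eq_zero fun m hm => by simp [Nat.choose_eq_zero_of_lt (mem_range.1 hm)]
  rw [hlow, zero_add]
  refine sum_congr rfl (fun j hj => ?_)
  have hjn : k + j ≤ n := by have := mem_range.1 hj; omega
  have hc := Ring.choose_smul_choose r (Nat.le_add_right k j)
  rw [Nat.add_sub_cancel_left, nsmul_eq_mul] at hc
  rw [← Nat.choose_symm hjn, show n - (k + j) = n - k - j by omega, ← mul_assoc, ← hc]
  ring

theorem Ring.sum_choose_mul_choose_mul_choose_add_self (r : R) (n : ℕ) :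
    ∑ m ∈ range (n + 1), (n.choose m : R) * Ring.choose r m * Ring.choose (r + m) m =
      ∑ k ∈ range (n + 1), Ring.choose r k ^ 2 * Ring.choose (r + (n - k : ℕ)) (n - k) := by
  calc _ = ∑ m ∈ range (n + 1), ∑ k ∈ range (n + 1),
          (n.choose m : R) * m.choose k * Ring.choose r m * Ring.choose r k := by
        refine sum_congr rfl (fun m hm => ?_)
        rw [Ring.choose_add_natCast_self (mem_range.1 hm), mul_sum]
        exact sum_congr rfl (fun k _ => by ring)
    _ = ∑ k ∈ range (n + 1), ∑ m ∈ range (n + 1),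
          (n.choose m : R) * m.choose k * Ring.choose r m * Ring.choose r k := sum_comm
    _ = _ := by
        refine sum_congr rfl (fun k hk => ?_)
        rw [sq, mul_assoc,
          Ring.choose_mul_choose_add_natCast_sub (Nat.lt_succ_iff.1 (mem_range.1 hk)), mul_sum]
        exact sum_congr rfl (fun m _ => by ring)

end BinomialRing

theorem stmt_0 (x : ℚ) (n : ℕ) :
    G n x = ∑ k ∈ range (n + 1), qchoose x k ^ 2 * (-1) ^ (n - k) * qchoose (-1 - x) (n - k) := by
  calc G n x
        = ∑ m ∈ range (n + 1), (n.choose m : ℚ) * Ring.choose x m * Ring.choose (x + m) m :=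
        sum_congr rfl fun m _ => by
          rw [qchoose_eq_ringChoose, qchoose_eq_ringChoose,
            ← Ring.neg_one_pow_mul_choose_neg_one_sub]
          ring
    _ = ∑ k ∈ range (n + 1), Ring.choose x k ^ 2 * Ring.choose (x + (n - k : ℕ)) (n - k) :=
        Ring.sum_choose_mul_choose_mul_choose_add_self x n
    _ = _ := sum_congr rfl fun k _ => by
          rw [qchoose_eq_ringChoose, qchoose_eq_ringChoose,
            ← Ring.neg_one_pow_mul_choose_neg_one_sub]
          ring
end

section
/- Let p be an odd prime and m,x ∈ ℤ_p. (i) If m ≢ 0,1 (mod p), then Σ_{k=0}^{p−1} G_k(x)/m^k ≡ Σ_{k=0}^{p−1} C(x,k)C(−1−x,k)/(1−m)^k (mod p). (ii) If m ≢ ±2 (mod p), then Σ_{k=0}^{p−1} C(2k,k)G_k(x)/(m+2)^k ≡ ((m+2)(m−2)/p)·Σ_{k=0}^{p−1} C(2k,k)C(x,k)C(−1−x,k)/(2−m)^k (mod p). Consequently, for p > 3 and m ∈ ℤ_p: Σ_{k=0}^{p−1} G_k^{(3)}/m^k ≡ Σ_{k=0}^{p−1} C(2k,k)C(3k,k)/(27−m)^k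 (mod p) for m ≢ 0,27 (mod p); Σ_{k=0}^{p−1} G_k^{(4)}/m^k ≡ Σ_{k=0}^{p−1} C(2k,k)C(4k,2k)/(64−m)^k (mod p) for m ≢ 0,64 (mod p); Σ_{k=0}^{p−1} G_k^{(6)}/m^k ≡ Σ_{k=0}^{p−1} C(3k,k)C(6k,3k)/(432−m)^k (mod p) for m ≢ 0,432 (mod p); Σ_{k=0}^{p−1} C(2k,k)G_k^{(3)}/m^k ≡ (m(m−108)/p)·Σ_{k=0}^{p−1} C(2k,k)²C(3k,k)/(108−m)^k (mod p) for m ≢ 0,108 (mod p); Σ_{k=0}^{p−1} C(2k,k)G_k^{(4)}/m^k ≡ (m(m−256)/p)·Σ_{k=0}^{p−1} C(2k,k)²C(4k,2k)/(256−m)^k (mod p) for m ≢ 0,256 (mod p); Σ_{k=0}^{p−1} C(2k,k)G_k^{(6)}/m^k ≡ (m(m−1728)/p)·Σ_{k=0}^{p−1} C(2k,k)C(3k,k)C(6k,3k)/(1728−m)^k (mod p) for m ≢ 0,1728 (mod p). -/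
/-!
Both sides of every congruence are `p`-integral, so it suffices to compare their residues in
`ZMod p`. There `G_k(x)` is the binomial transform `∑_j C(k,j) (-1)^j c_j` of
`c_j = C(x,j) C(-1-x,j)`, and exchanging the two sums leaves, for each `j < p`, a sum over `k`:

* for (i), `∑_{k<p} C(k,j) y^k = (y/(1-y))^j` in `ZMod p` (Pascal's rule together with
  `C(p,j+1) ≡ 0`), applied to `y = 1/m`;
* for (ii), `C(2k,k) ≡ (-4)^k C(n,k)` with `n = (p-1)/2` makes the sum over `k` terminate:
  `∑_k C(n,k) C(k,j) t^k = C(n,j) t^j (1+t)^(n-j)` with `t = -4/(m+2)`, and Fermat's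
  `(m+2)^(p-1) = 1` turns `(m+2)^(-n)` into `(m+2)^n`, leaving the factor
  `((m+2)(m-2))^n ≡ ((m+2)(m-2)/p)`.

The six consequences are (i) and (ii) at `m/c` for `c = 27, 64, 432` and `x = -1/3, -1/4, -1/6`,
through `c^k C(x,k) C(-1-x,k) = C(2k,k)C(3k,k), C(2k,k)C(4k,2k), C(3k,k)C(6k,3k)`.
-/

open Finset

section BinomialTransform

variable {R : Type*}

def binomialTransform [CommRing R] (a : ℕ → R) (n : ℕ) : R :=
  ∑ j ∈ range (n + 1), (n.choose j : R) * (-1) ^ j * a j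

theorem sum_range_binomialTransform_mul [CommRing R] (a w : ℕ → R) (N : ℕ) :
    ∑ k ∈ range N, binomialTransform a k * w k
      = ∑ j ∈ range N, (-1) ^ j * a j * ∑ k ∈ range N, (k.choose j : R) * w k := by
  have hext : ∀ k ∈ range N, binomialTransform a k * w k
      = ∑ j ∈ range N, (k.choose j : R) * (-1) ^ j * a j * w k := by
    intro k hk
    rw [binomialTransform, sum_mul]
    refine sum_subset (range_subset_range.mpr (by simpa using hk)) fun j _ hj => ?_
    rw [Nat.choose_eq_zero_of_lt (by simpa using hj), Nat.cast_zero, zero_mul, zero_mul, zero_mul]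
  rw [sum_congr rfl hext, sum_comm]
  exact sum_congr rfl fun j _ => by rw [mul_sum]; exact sum_congr rfl fun k _ => by ring

theorem sum_range_choose_mul_choose_mul_pow [CommSemiring R] {n N j : ℕ} (hn : n < N)
    (hj : j < N) (s : R) :
    ∑ k ∈ range N, (k.choose j : R) * ((n.choose k : R) * s ^ k)
      = (n.choose j : R) * s ^ j * (1 + s) ^ (n - j) := by
  obtain ⟨t, rfl⟩ := Nat.exists_eq_add_of_le hj.le
  rw [sum_range_add, sum_eq_zero fun k hk => by
    rw [Nat.choose_eq_zero_of_lt (mem_range.mp hk), Nat.cast_zero, zero_mul], zero_add]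
  have hterm : ∀ i ∈ range t, ((j + i).choose j : R) * ((n.choose (j + i) : R) * s ^ (j + i))
      = (n.choose j : R) * s ^ j * (((n - j).choose i : R) * s ^ i) := by
    intro i _
    have h := Nat.choose_mul (n := n) (Nat.le_add_right j i)
    rw [Nat.add_sub_cancel_left] at h
    rw [pow_add, ← mul_assoc, mul_comm ((j + i).choose j : R), ← Nat.cast_mul, h]
    push_cast
    ring
  rw [sum_congr rfl hterm, ← mul_sum, add_comm 1 s, add_pow]
  congr 1
  refine (sum_subset (range_subset_range.mpr (by omega)) fun i _ hi => ?_).symm.trans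
    (sum_congr rfl fun i _ => by ring)
  rw [Nat.choose_eq_zero_of_lt (by simpa using hi), Nat.cast_zero, zero_mul]

theorem one_sub_mul_sum_range_choose_succ_mul_pow [CommRing R] (y : R) (N j : ℕ) :
    (1 - y) * ∑ k ∈ range N, (k.choose (j + 1) : R) * y ^ k
      = y * ∑ k ∈ range N, (k.choose j : R) * y ^ k - (N.choose (j + 1) : R) * y ^ N := by
  induction N with
  | zero => simp
  | succ N ih =>
    rw [sum_range_succ, sum_range_succ, Nat.choose_succ_succ', Nat.cast_add]
    linear_combination ih

end BinomialTransform

theorem qchoose_zero (x : ℚ) : qchoose x 0 = 1 := by simp [qchoose]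

theorem qchoose_succ (x : ℚ) (k : ℕ) : qchoose x (k + 1) = qchoose x k * (x - k) / (k + 1) := by
  rw [qchoose, qchoose, prod_range_succ, Nat.factorial_succ, Nat.cast_mul, Nat.cast_succ,
    mul_comm ((k : ℚ) + 1), ← div_div, mul_div_right_comm]

theorem G_eq_binomialTransform (n : ℕ) (x : ℚ) :
    G n x = binomialTransform (fun k => qchoose x k * qchoose (-1 - x) k) n := by
  simp only [G, binomialTransform, mul_assoc]

open Nat in
theorem pow_mul_qchoose_third_mul_factorial (k : ℕ) :
    (27 : ℚ) ^ k * qchoose (-1/3) k * qchoose (-2/3) k * (k ! : ℚ) ^ 3 = ((3 * k)! : ℚ) := by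
  induction k with
  | zero => simp [qchoose_zero]
  | succ k ih =>
    rw [show 3 * (k + 1) = 3 * k + 1 + 1 + 1 by ring]
    simp only [factorial_succ, qchoose_succ, pow_succ, cast_mul, cast_succ] at ih ⊢
    rw [← ih]
    field_simp
    ring

open Nat in
theorem pow_mul_qchoose_quarter_mul_factorial (k : ℕ) :
    (64 : ℚ) ^ k * qchoose (-1/4) k * qchoose (-3/4) k * (k ! : ℚ) ^ 2 * ((2 * k)! : ℚ)
      = ((4 * k)! : ℚ) := by
  induction k with
  | zero => simp [qchoose_zero]
  | succ k ih =>
    rw [show 4 * (k + 1) = 4 * k + 1 + 1 + 1 + 1 by ring, show 2 * (k + 1) = 2 * k + 1 + 1 by ring]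
    simp only [factorial_succ, qchoose_succ, pow_succ, cast_mul, cast_succ] at ih ⊢
    rw [← ih]
    field_simp
    ring

open Nat in
theorem pow_mul_qchoose_sixth_mul_factorial (k : ℕ) :
    (432 : ℚ) ^ k * qchoose (-1/6) k * qchoose (-5/6) k * (k ! : ℚ) * ((2 * k)! : ℚ)
      * ((3 * k)! : ℚ) = ((6 * k)! : ℚ) := by
  induction k with
  | zero => simp [qchoose_zero]
  | succ k ih =>
    rw [show 6 * (k + 1) = 6 * k + 1 + 1 + 1 + 1 + 1 + 1 by ring,
      show 3 * (k + 1) = 3 * k + 1 + 1 + 1 by ring, show 2 * (k + 1) = 2 * k + 1 + 1 by ring]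
    simp only [factorial_succ, qchoose_succ, pow_succ, cast_mul, cast_succ] at ih ⊢
    rw [← ih]
    field_simp
    ring

open Nat in
theorem pow_mul_qchoose_third (k : ℕ) :
    (27 : ℚ) ^ k * (qchoose (-1/3) k * qchoose (-2/3) k)
      = ((2 * k).choose k : ℚ) * ((3 * k).choose k : ℚ) := by
  have := factorial_ne_zero k
  have := factorial_ne_zero (2 * k)
  rw [cast_choose ℚ (by omega : k ≤ 2 * k), cast_choose ℚ (by omega : k ≤ 3 * k),
    show 2 * k - k = k by omega, show 3 * k - k = 2 * k by omega,
    ← pow_mul_qchoose_third_mul_factorial]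
  field_simp

open Nat in
theorem pow_mul_qchoose_quarter (k : ℕ) :
    (64 : ℚ) ^ k * (qchoose (-1/4) k * qchoose (-3/4) k)
      = ((2 * k).choose k : ℚ) * ((4 * k).choose (2 * k) : ℚ) := by
  have := factorial_ne_zero k
  have := factorial_ne_zero (2 * k)
  rw [cast_choose ℚ (by omega : k ≤ 2 * k), cast_choose ℚ (by omega : 2 * k ≤ 4 * k),
    show 2 * k - k = k by omega, show 4 * k - 2 * k = 2 * k by omega,
    ← pow_mul_qchoose_quarter_mul_factorial]
  field_simp

open Nat in
theorem pow_mul_qchoose_sixth (k : ℕ) :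
    (432 : ℚ) ^ k * (qchoose (-1/6) k * qchoose (-5/6) k)
      = ((3 * k).choose k : ℚ) * ((6 * k).choose (3 * k) : ℚ) := by
  have := factorial_ne_zero k
  have := factorial_ne_zero (2 * k)
  have := factorial_ne_zero (3 * k)
  rw [cast_choose ℚ (by omega : k ≤ 3 * k), cast_choose ℚ (by omega : 3 * k ≤ 6 * k),
    show 3 * k - k = 2 * k by omega, show 6 * k - 3 * k = 3 * k by omega,
    ← pow_mul_qchoose_sixth_mul_factorial]
  field_simp

theorem isPInt_iff_natCast_den_ne_zero {p : ℕ} {r : ℚ} :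
    IsPInt p r ↔ (r.den : ZMod p) ≠ 0 := by
  rw [IsPInt, Ne, ZMod.natCast_eq_zero_iff]

theorem isPInt_intCast_div {p : ℕ} (n : ℤ) {d : ℤ} (hd : (d : ZMod p) ≠ 0) :
    IsPInt p (n / d) := by
  rintro ⟨e, he⟩
  have hdvd : ((n / d : ℚ).den : ℤ) ∣ d := by
    rw [← Rat.divInt_eq_div]
    exact Rat.den_dvd n d
  rw [he] at hdvd
  exact hd ((ZMod.intCast_zmod_eq_zero_iff_dvd d p).mpr
    (dvd_trans ⟨e, by push_cast; ring⟩ hdvd))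

section ModP

variable {p : ℕ} [hp : Fact p.Prime]

/-- The cast `ℚ → ZMod p` sends `r` to `r.num / r.den`, which is `0` when `p ∣ r.den`; hence
`p`-integrality is part of the definition. -/
def HasResidue (p : ℕ) [Fact p.Prime] (r : ℚ) (v : ZMod p) : Prop :=
  IsPInt p r ∧ (r : ZMod p) = v

namespace HasResidue

theorem of_isPInt {r : ℚ} (h : IsPInt p r) : HasResidue p r r := ⟨h, rfl⟩

theorem congr_val {r : ℚ} {v w : ZMod p} (h : HasResidue p r v) (hvw : v = w) :
    HasResidue p r w := hvw ▸ h

theorem intCast (n : ℤ) : HasResidue p n n :=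
  ⟨fun h => hp.out.one_lt.ne' (Nat.dvd_one.mp (by simpa using h)), by simp⟩

theorem natCast (n : ℕ) : HasResidue p n n := by exact_mod_cast intCast (p := p) n

theorem ofNat (n : ℕ) [n.AtLeastTwo] : HasResidue p (OfNat.ofNat n) (OfNat.ofNat n) := by
  exact_mod_cast natCast (p := p) n

theorem zero : HasResidue p 0 0 := by simpa using natCast (p := p) 0

theorem one : HasResidue p 1 1 := by simpa using natCast (p := p) 1

theorem add {a b : ℚ} {u v : ZMod p} (ha : HasResidue p a u) (hb : HasResidue p b v) :
    HasResidue p (a + b) (u + v) := by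
  refine ⟨fun h => ?_, ?_⟩
  · rcases (Nat.Prime.dvd_mul hp.out).mp (h.trans (Rat.add_den_dvd a b)) with h | h
    exacts [ha.1 h, hb.1 h]
  · rw [Rat.cast_add_of_ne_zero (isPInt_iff_natCast_den_ne_zero.mp ha.1)
      (isPInt_iff_natCast_den_ne_zero.mp hb.1), ha.2, hb.2]

theorem mul {a b : ℚ} {u v : ZMod p} (ha : HasResidue p a u) (hb : HasResidue p b v) :
    HasResidue p (a * b) (u * v) := by
  refine ⟨fun h => ?_, ?_⟩
  · rcases (Nat.Prime.dvd_mul hp.out).mp (h.trans (Rat.mul_den_dvd a b)) with h | h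
    exacts [ha.1 h, hb.1 h]
  · rw [Rat.cast_mul_of_ne_zero (isPInt_iff_natCast_den_ne_zero.mp ha.1)
      (isPInt_iff_natCast_den_ne_zero.mp hb.1), ha.2, hb.2]

theorem neg {a : ℚ} {u : ZMod p} (ha : HasResidue p a u) : HasResidue p (-a) (-u) :=
  ⟨by simpa [IsPInt] using ha.1, by rw [Rat.cast_neg, ha.2]⟩

theorem sub {a b : ℚ} {u v : ZMod p} (ha : HasResidue p a u) (hb : HasResidue p b v) :
    HasResidue p (a - b) (u - v) := by
  simpa only [sub_eq_add_neg] using ha.add hb.neg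

theorem inv {a : ℚ} {u : ZMod p} (ha : HasResidue p a u) (hu : u ≠ 0) :
    HasResidue p a⁻¹ u⁻¹ := by
  have hnum : (a.num : ZMod p) ≠ 0 := by
    intro h
    apply hu
    rw [← ha.2, Rat.cast_def, h, zero_div]
  refine ⟨?_, by rw [Rat.cast_inv_of_ne_zero hnum, ha.2]⟩
  have hinv : a⁻¹ = ((a.den : ℤ) : ℚ) / (a.num : ℚ) := by
    conv_lhs => rw [← Rat.num_div_den a]
    rw [inv_div]; rfl
  exact hinv ▸ isPInt_intCast_div (p := p) a.den hnum

theorem div {a b : ℚ} {u v : ZMod p} (ha : HasResidue p a u) (hb : HasResidue p b v)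
    (hv : v ≠ 0) :
    HasResidue p (a / b) (u / v) := by
  simpa only [div_eq_mul_inv] using ha.mul (hb.inv hv)

theorem pow {a : ℚ} {u : ZMod p} (ha : HasResidue p a u) (n : ℕ) :
    HasResidue p (a ^ n) (u ^ n) := by
  induction n with
  | zero => simpa using one
  | succ n ih => simpa only [pow_succ] using ih.mul ha

theorem sum {ι : Type*} (s : Finset ι) {f : ι → ℚ} {v : ι → ZMod p}
    (h : ∀ i ∈ s, HasResidue p (f i) (v i)) :
    HasResidue p (∑ i ∈ s, f i) (∑ i ∈ s, v i) := by
  classical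
  induction s using Finset.induction_on with
  | empty => simpa using zero
  | insert i s hi ih =>
    rw [sum_insert hi, sum_insert hi]
    exact (h i (mem_insert_self i s)).add (ih fun j hj => h j (mem_insert_of_mem hj))

end HasResidue

theorem ratCong_one_iff {a b : ℚ} {u v : ZMod p} (ha : HasResidue p a u) (hb : HasResidue p b v) :
    RatCong p 1 a b ↔ u = v := by
  have hp0 : (p : ℚ) ≠ 0 := by exact_mod_cast hp.out.ne_zero
  obtain ⟨hd, hdv⟩ := ha.sub hb
  rw [RatCong, pow_one, ← sub_eq_zero, ← hdv]
  constructor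
  · intro h
    have h1 := (HasResidue.of_isPInt h).mul (HasResidue.natCast (p := p) p)
    rw [ZMod.natCast_self, mul_zero, div_mul_cancel₀ _ hp0] at h1
    exact h1.2
  · intro h0
    have hden := isPInt_iff_natCast_den_ne_zero.mp hd
    have hnum : ((a - b).num : ZMod p) = 0 := by
      rwa [Rat.cast_def, div_eq_zero_iff, or_iff_left hden] at h0
    obtain ⟨e, he⟩ := (ZMod.intCast_zmod_eq_zero_iff_dvd _ p).mp hnum
    have : (a - b) / p = (e : ℚ) / (((a - b).den : ℤ) : ℚ) := by
      conv_lhs => rw [← Rat.num_div_den (a - b), he]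
      push_cast
      field_simp
    rw [this]
    exact isPInt_intCast_div e (by simpa using hden)

theorem qLegendre_eq_quadraticChar {r : ℚ} {v : ZMod p} (h : HasResidue p r v) :
    qLegendre r p = quadraticChar (ZMod p) v := by
  have hden : (r.den : ZMod p) ≠ 0 := isPInt_iff_natCast_den_ne_zero.mp h.1
  have hval : ((r.num * r.den : ℤ) : ZMod p) = v * (r.den : ZMod p) ^ 2 := by
    rw [← h.2, Rat.cast_def]
    push_cast
    field_simp
  rw [qLegendre, ← jacobiSym.legendreSym.to_jacobiSym, legendreSym, hval, map_mul, map_pow,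
    quadraticChar_sq_one hden, mul_one]

theorem qLegendre_eq_of_eq_mul_sq {r s : ℚ} {v w u : ZMod p} (hr : HasResidue p r v)
    (hs : HasResidue p s w) (hu : u ≠ 0) (hvw : v = w * u ^ 2) :
    qLegendre r p = qLegendre s p := by
  rw [qLegendre_eq_quadraticChar hr, qLegendre_eq_quadraticChar hs, hvw, map_mul, map_pow,
    quadraticChar_sq_one hu, mul_one]

theorem intCast_qLegendre (hodd : Odd p) {r : ℚ} {v : ZMod p} (h : HasResidue p r v) :
    ((qLegendre r p : ℤ) : ZMod p) = v ^ (p / 2) := by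
  have hchar : ringChar (ZMod p) ≠ 2 := by
    rw [ZMod.ringChar_zmod_n]
    rintro rfl
    exact Nat.not_even_iff_odd.mpr hodd even_two
  rw [qLegendre_eq_quadraticChar h, quadraticChar_eq_pow_of_char_ne_two' hchar, ZMod.card]

theorem sum_range_choose_mul_pow_eq {y : ZMod p} (hy : y ≠ 1) {j : ℕ} (hj : j < p) :
    ∑ k ∈ range p, (k.choose j : ZMod p) * y ^ k = (y / (1 - y)) ^ j := by
  have hy' : 1 - y ≠ 0 := sub_ne_zero.mpr (Ne.symm hy)
  induction j with
  | zero =>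
    have h := geom_sum_mul y p
    rw [ZMod.pow_card] at h
    simpa using mul_right_cancel₀ (sub_ne_zero.mpr hy) (h.trans (one_mul _).symm)
  | succ j ih =>
    have hchoose : (p.choose (j + 1) : ZMod p) = 0 :=
      (ZMod.natCast_eq_zero_iff _ _).mpr (hp.out.dvd_choose_self j.succ_ne_zero hj)
    have h := one_sub_mul_sum_range_choose_succ_mul_pow y p j
    rw [ih (by omega), hchoose, zero_mul, sub_zero] at h
    rw [pow_succ, ← mul_div_assoc, eq_div_iff hy']
    linear_combination h

-- `C(2k,k) = (-4)^k C(-1/2,k)`, and `(p-1)/2 ≡ -1/2`.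
theorem cast_choose_two_mul_self_eq (hodd : Odd p) {k : ℕ} (hk : k < p) :
    ((2 * k).choose k : ZMod p) = (-4) ^ k * ((p / 2).choose k : ZMod p) := by
  induction k with
  | zero => simp
  | succ k ih =>
    have hk1 : ((k + 1 : ℕ) : ZMod p) ≠ 0 := by
      rw [Ne, ZMod.natCast_eq_zero_iff]
      exact Nat.not_dvd_of_pos_of_lt k.succ_pos hk
    have hp2 : 2 * (p / 2 : ℕ) + 1 = (p : ZMod p) := by
      exact_mod_cast congrArg Nat.cast (Nat.two_mul_div_two_add_one_of_odd hodd)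
    have hc := congrArg (Nat.cast (R := ZMod p)) (Nat.succ_mul_centralBinom_succ k)
    have hn := congrArg (Nat.cast (R := ZMod p)) (Nat.choose_succ_right_eq (p / 2) k)
    simp only [Nat.centralBinom_eq_two_mul_choose] at hc
    push_cast at hc hn hk1
    rw [ZMod.natCast_self] at hp2
    apply mul_left_cancel₀ hk1
    have hsub : ((p / 2).choose k : ZMod p) * ((p / 2 - k : ℕ) : ZMod p)
        = ((p / 2).choose k : ZMod p) * ((p / 2 : ℕ) - k) := by
      rcases le_or_gt k (p / 2) with h | h
      · rw [Nat.cast_sub h]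
      · rw [Nat.choose_eq_zero_of_lt h, Nat.cast_zero, zero_mul, zero_mul]
    rw [ih (by omega)] at hc
    linear_combination hc - (-4) ^ (k + 1) * (hn.trans hsub)
      + 2 * (-4) ^ k * ((p / 2).choose k : ZMod p) * hp2

theorem sum_range_binomialTransform_div_pow {a : ℕ → ZMod p} {M : ZMod p} (hM0 : M ≠ 0)
    (hM1 : M ≠ 1) :
    ∑ k ∈ range p, binomialTransform a k / M ^ k = ∑ k ∈ range p, a k / (1 - M) ^ k := by
  have hy : M⁻¹ ≠ 1 := by rwa [Ne, inv_eq_one]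
  have hM1' : 1 - M ≠ 0 := sub_ne_zero.mpr (Ne.symm hM1)
  have hratio : -(M⁻¹ / (1 - M⁻¹)) = (1 - M)⁻¹ := by
    field_simp
    ring
  simp_rw [div_eq_mul_inv, ← inv_pow]
  rw [sum_range_binomialTransform_mul]
  refine sum_congr rfl fun j hj => ?_
  rw [sum_range_choose_mul_pow_eq hy (mem_range.mp hj), ← hratio, neg_pow]
  ring

theorem sum_range_centralBinom_mul_binomialTransform_div_pow (hodd : Odd p) {a : ℕ → ZMod p}
    {M : ZMod p} (hM2 : M + 2 ≠ 0) (hM2' : M - 2 ≠ 0) :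
    ∑ k ∈ range p, ((2 * k).choose k : ZMod p) * binomialTransform a k / (M + 2) ^ k
      = ((M + 2) * (M - 2)) ^ (p / 2)
        * ∑ k ∈ range p, ((2 * k).choose k : ZMod p) * a k / (2 - M) ^ k := by
  have hn : p / 2 < p := Nat.div_lt_self hp.out.pos one_lt_two
  have hfermat : (M + 2) ^ (p / 2) * (M + 2) ^ (p / 2) = 1 := by
    rw [← pow_add, ← two_mul, Nat.two_mul_odd_div_two (Nat.odd_iff.mp hodd)]
    exact ZMod.pow_card_sub_one_eq_one hM2
  have hterm : ∀ k ∈ range p, ((2 * k).choose k : ZMod p) * binomialTransform a k / (M + 2) ^ k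
      = binomialTransform a k * (((p / 2).choose k : ZMod p) * (-4 / (M + 2)) ^ k) := by
    intro k hk
    rw [cast_choose_two_mul_self_eq hodd (mem_range.mp hk), div_pow]
    ring
  rw [sum_congr rfl hterm, sum_range_binomialTransform_mul, mul_sum]
  refine sum_congr rfl fun j hj => ?_
  rw [sum_range_choose_mul_choose_mul_pow hn (mem_range.mp hj),
    cast_choose_two_mul_self_eq hodd (mem_range.mp hj)]
  rcases le_or_gt j (p / 2) with hjn | hjn
  · obtain ⟨r, hr⟩ := Nat.exists_eq_add_of_le hjn
    rw [hr, pow_add] at hfermat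
    rw [hr, Nat.add_sub_cancel_left]
    have hsign : (-1 : ZMod p) ^ j * (-1) ^ j = 1 := by rw [← mul_pow]; norm_num
    rw [show 1 + -4 / (M + 2) = (M - 2) / (M + 2) by field_simp; ring,
      show (2 : ZMod p) - M = -1 * (M - 2) by ring, mul_pow, mul_pow, div_pow, div_pow, pow_add,
      pow_add]
    field_simp
    linear_combination a j * ((j + r).choose j : ZMod p) * (-4) ^ j * (hsign - hfermat)
  · rw [Nat.choose_eq_zero_of_lt hjn]
    simp

theorem HasResidue.binomialTransform {a : ℕ → ℚ} {b : ℕ → ZMod p} {n : ℕ}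
    (h : ∀ j ≤ n, HasResidue p (a j) (b j)) :
    HasResidue p (binomialTransform a n) (binomialTransform b n) :=
  HasResidue.sum _ fun j hj =>
    ((natCast _).mul (one.neg.pow j)).mul (h j (Nat.lt_succ_iff.mp (mem_range.mp hj)))

theorem isPInt_qchoose {x : ℚ} (hx : IsPInt p x) {k : ℕ} (hk : k < p) :
    IsPInt p (qchoose x k) := by
  induction k with
  | zero => simpa [qchoose_zero] using HasResidue.one.1
  | succ k ih =>
    have hk1 : ((k + 1 : ℕ) : ZMod p) ≠ 0 := by
      rw [Ne, ZMod.natCast_eq_zero_iff]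
      exact Nat.not_dvd_of_pos_of_lt k.succ_pos hk
    rw [qchoose_succ, ← Nat.cast_succ]
    exact (((HasResidue.of_isPInt (ih (by omega))).mul
      ((HasResidue.of_isPInt hx).sub (.natCast k))).div (.natCast (k + 1)) hk1).1

theorem hasResidue_qchoose_mul_qchoose {x : ℚ} (hx : IsPInt p x) {k : ℕ} (hk : k < p) :
    HasResidue p (qchoose x k * qchoose (-1 - x) k)
      ((qchoose x k : ZMod p) * (qchoose (-1 - x) k : ZMod p)) :=
  (HasResidue.of_isPInt (isPInt_qchoose hx hk)).mul
    (HasResidue.of_isPInt (isPInt_qchoose (HasResidue.one.neg.sub (.of_isPInt hx)).1 hk))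

theorem hasResidue_G {x : ℚ} (hx : IsPInt p x) {n : ℕ} (hn : n < p) :
    HasResidue p (G n x)
      (binomialTransform (fun k => (qchoose x k : ZMod p) * (qchoose (-1 - x) k : ZMod p)) n) := by
  rw [G_eq_binomialTransform]
  exact .binomialTransform fun j hj => hasResidue_qchoose_mul_qchoose hx (by omega)

theorem sum_G_div_pow_ratCong {m x : ℚ} (hm : IsPInt p m) (hx : IsPInt p x)
    (h0 : (m : ZMod p) ≠ 0) (h1 : (m : ZMod p) ≠ 1) :
    RatCong p 1 (∑ k ∈ range p, G k x / m ^ k)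
      (∑ k ∈ range p, qchoose x k * qchoose (-1 - x) k / (1 - m) ^ k) := by
  have h1' : 1 - (m : ZMod p) ≠ 0 := sub_ne_zero.mpr (Ne.symm h1)
  refine (ratCong_one_iff (HasResidue.sum _ fun k hk => ?_) (HasResidue.sum _ fun k hk => ?_)).mpr
    (sum_range_binomialTransform_div_pow (a := fun k =>
      (qchoose x k : ZMod p) * (qchoose (-1 - x) k : ZMod p)) h0 h1)
  · exact (hasResidue_G hx (mem_range.mp hk)).div ((HasResidue.of_isPInt hm).pow k)
      (pow_ne_zero k h0)
  · exact (hasResidue_qchoose_mul_qchoose hx (mem_range.mp hk)).div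
      ((HasResidue.one.sub (.of_isPInt hm)).pow k) (pow_ne_zero k h1')

theorem sum_centralBinom_mul_G_div_pow_ratCong (hodd : Odd p) {m x : ℚ} (hm : IsPInt p m)
    (hx : IsPInt p x) (hm2 : (m : ZMod p) ≠ 2) (hm2' : (m : ZMod p) ≠ -2) :
    RatCong p 1 (∑ k ∈ range p, ((2 * k).choose k : ℚ) * G k x / (m + 2) ^ k)
      ((qLegendre ((m + 2) * (m - 2)) p : ℚ) *
        ∑ k ∈ range p,
          ((2 * k).choose k : ℚ) * qchoose x k * qchoose (-1 - x) k / (2 - m) ^ k) := by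
  have h2 : (m : ZMod p) + 2 ≠ 0 := fun h => hm2' (eq_neg_of_add_eq_zero_left h)
  have h2' : (m : ZMod p) - 2 ≠ 0 := sub_ne_zero.mpr hm2
  have h2'' : 2 - (m : ZMod p) ≠ 0 := sub_ne_zero.mpr (Ne.symm hm2)
  have hm' := HasResidue.of_isPInt hm
  have htwo : HasResidue p 2 (2 : ZMod p) := .ofNat 2
  have hLeg : HasResidue p (qLegendre ((m + 2) * (m - 2)) p)
      ((((m : ZMod p) + 2) * ((m : ZMod p) - 2)) ^ (p / 2)) :=
    (HasResidue.intCast _).congr_val (intCast_qLegendre hodd ((hm'.add htwo).mul (hm'.sub htwo)))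
  refine (ratCong_one_iff (HasResidue.sum _ fun k hk => ?_)
    (hLeg.mul (HasResidue.sum _ fun k hk => ?_))).mpr
    (sum_range_centralBinom_mul_binomialTransform_div_pow (a := fun k =>
      (qchoose x k : ZMod p) * (qchoose (-1 - x) k : ZMod p)) hodd h2 h2')
  · exact ((HasResidue.natCast _).mul (hasResidue_G hx (mem_range.mp hk))).div
      ((hm'.add htwo).pow k) (pow_ne_zero k h2)
  · rw [mul_assoc]
    exact ((HasResidue.natCast _).mul (hasResidue_qchoose_mul_qchoose hx (mem_range.mp hk))).div
      ((htwo.sub hm').pow k) (pow_ne_zero k h2'')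

theorem sum_pow_mul_G_div_pow_ratCong {c m x : ℚ} {γ : ZMod p} {A : ℕ → ℚ}
    (hc : HasResidue p c γ) (hγ : γ ≠ 0) (hm : IsPInt p m) (hx : IsPInt p x)
    (hA : ∀ k, c ^ k * (qchoose x k * qchoose (-1 - x) k) = A k)
    (h0 : (m : ZMod p) ≠ 0) (hmc : (m : ZMod p) ≠ γ) :
    RatCong p 1 (∑ k ∈ range p, c ^ k * G k x / m ^ k)
      (∑ k ∈ range p, A k / (c - m) ^ k) := by
  have hc0 : c ≠ 0 := by rintro rfl; exact hγ (hc.2.symm.trans Rat.cast_zero)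
  have hmc' := (HasResidue.of_isPInt hm).div hc hγ
  have H := sum_G_div_pow_ratCong hmc'.1 hx (by rw [hmc'.2]; exact div_ne_zero h0 hγ)
    (by rw [hmc'.2, Ne, div_eq_one_iff_eq hγ]; exact hmc)
  convert H using 2
  · rw [div_pow, div_div_eq_mul_div, mul_comm]
  · rw [← hA, one_sub_div hc0, div_pow, div_div_eq_mul_div, mul_comm]

theorem sum_centralBinom_mul_pow_mul_G_div_pow_ratCong (hodd : Odd p) {c d m x : ℚ}
    {γ : ZMod p} {B : ℕ → ℚ} (hc : HasResidue p c γ) (hγ : γ ≠ 0) (hd : 4 * c = d)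
    (hm : IsPInt p m) (hx : IsPInt p x)
    (hB : ∀ k, ((2 * k).choose k : ℚ) * c ^ k * (qchoose x k * qchoose (-1 - x) k) = B k)
    (h0 : (m : ZMod p) ≠ 0) (hmd : (m : ZMod p) ≠ 4 * γ) :
    RatCong p 1 (∑ k ∈ range p, ((2 * k).choose k : ℚ) * (c ^ k * G k x) / m ^ k)
      ((qLegendre (m * (m - d)) p : ℚ) * ∑ k ∈ range p, B k / (d - m) ^ k) := by
  have hc0 : c ≠ 0 := by rintro rfl; exact hγ (hc.2.symm.trans Rat.cast_zero)
  have hm' := HasResidue.of_isPInt hm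
  have htwo : HasResidue p 2 (2 : ZMod p) := .ofNat 2
  have hM := (hm'.div hc hγ).sub htwo
  have H := sum_centralBinom_mul_G_div_pow_ratCong hodd hM.1 hx
    (by rw [hM.2]; intro h; apply hmd; field_simp at h; linear_combination h)
    (by rw [hM.2]; intro h; apply h0; field_simp at h; linear_combination h)
  have hLeg : qLegendre ((m / c - 2 + 2) * (m / c - 2 - 2)) p = qLegendre (m * (m - d)) p := by
    refine qLegendre_eq_of_eq_mul_sq ((hM.add htwo).mul (hM.sub htwo))
      (hm'.mul (hm'.sub (hd ▸ (HasResidue.ofNat 4).mul hc))) (inv_ne_zero hγ) ?_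
    field_simp
    ring
  rw [hLeg] at H
  convert H using 2
  · rw [sub_add_cancel, div_pow, div_div_eq_mul_div]
    ring
  · refine sum_congr rfl fun k _ => ?_
    rw [← hB, ← hd, show 2 - (m / c - 2) = (4 * c - m) / c by field_simp; ring, div_pow,
      div_div_eq_mul_div]
    ring

theorem natCast_two_pow_mul_three_pow_ne_zero (hp3 : 3 < p) (a b : ℕ) :
    ((2 ^ a * 3 ^ b : ℕ) : ZMod p) ≠ 0 := by
  rw [Ne, ZMod.natCast_eq_zero_iff]
  intro h
  rcases (Nat.Prime.dvd_mul hp.out).mp h with h | h <;>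
    have := Nat.le_of_dvd (by norm_num) (hp.out.dvd_of_dvd_pow h) <;> omega

theorem sum_G3_div_pow_ratCong (hp3 : 3 < p) {m : ℚ} (hm : IsPInt p m)
    (h0 : (m : ZMod p) ≠ 0) (h27 : (m : ZMod p) ≠ 27) :
    RatCong p 1 (∑ k ∈ range p, G3 k / m ^ k)
      (∑ k ∈ range p, ((2 * k).choose k : ℚ) * ((3 * k).choose k : ℚ) / (27 - m) ^ k) :=
  sum_pow_mul_G_div_pow_ratCong (.ofNat 27)
    (by exact_mod_cast natCast_two_pow_mul_three_pow_ne_zero hp3 0 3) hm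
    (HasResidue.one.neg.div (.ofNat 3)
      (by exact_mod_cast natCast_two_pow_mul_three_pow_ne_zero hp3 0 1)).1
    (fun k => by rw [show (-1 - -1 / 3 : ℚ) = -2 / 3 by norm_num, pow_mul_qchoose_third]) h0 h27

theorem sum_G4_div_pow_ratCong (hp3 : 3 < p) {m : ℚ} (hm : IsPInt p m)
    (h0 : (m : ZMod p) ≠ 0) (h64 : (m : ZMod p) ≠ 64) :
    RatCong p 1 (∑ k ∈ range p, G4 k / m ^ k)
      (∑ k ∈ range p,
        ((2 * k).choose k : ℚ) * ((4 * k).choose (2 * k) : ℚ) / (64 - m) ^ k) :=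
  sum_pow_mul_G_div_pow_ratCong (.ofNat 64)
    (by exact_mod_cast natCast_two_pow_mul_three_pow_ne_zero hp3 6 0) hm
    (HasResidue.one.neg.div (.ofNat 4)
      (by exact_mod_cast natCast_two_pow_mul_three_pow_ne_zero hp3 2 0)).1
    (fun k => by rw [show (-1 - -1 / 4 : ℚ) = -3 / 4 by norm_num, pow_mul_qchoose_quarter]) h0 h64

theorem sum_G6_div_pow_ratCong (hp3 : 3 < p) {m : ℚ} (hm : IsPInt p m)
    (h0 : (m : ZMod p) ≠ 0) (h432 : (m : ZMod p) ≠ 432) :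
    RatCong p 1 (∑ k ∈ range p, G6 k / m ^ k)
      (∑ k ∈ range p,
        ((3 * k).choose k : ℚ) * ((6 * k).choose (3 * k) : ℚ) / (432 - m) ^ k) :=
  sum_pow_mul_G_div_pow_ratCong (.ofNat 432)
    (by exact_mod_cast natCast_two_pow_mul_three_pow_ne_zero hp3 4 3) hm
    (HasResidue.one.neg.div (.ofNat 6)
      (by exact_mod_cast natCast_two_pow_mul_three_pow_ne_zero hp3 1 1)).1
    (fun k => by rw [show (-1 - -1 / 6 : ℚ) = -5 / 6 by norm_num, pow_mul_qchoose_sixth]) h0 h432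

theorem sum_centralBinom_mul_G3_div_pow_ratCong (hp3 : 3 < p) {m : ℚ} (hm : IsPInt p m)
    (h0 : (m : ZMod p) ≠ 0) (h108 : (m : ZMod p) ≠ 108) :
    RatCong p 1 (∑ k ∈ range p, ((2 * k).choose k : ℚ) * G3 k / m ^ k)
      ((qLegendre (m * (m - 108)) p : ℚ) *
        ∑ k ∈ range p,
          ((2 * k).choose k : ℚ) ^ 2 * ((3 * k).choose k : ℚ) / (108 - m) ^ k) :=
  sum_centralBinom_mul_pow_mul_G_div_pow_ratCong (hp.out.odd_of_ne_two (by omega)) (.ofNat 27)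
    (by exact_mod_cast natCast_two_pow_mul_three_pow_ne_zero hp3 0 3) (by norm_num) hm
    (HasResidue.one.neg.div (.ofNat 3)
      (by exact_mod_cast natCast_two_pow_mul_three_pow_ne_zero hp3 0 1)).1
    (fun k => by
      rw [show (-1 - -1 / 3 : ℚ) = -2 / 3 by norm_num, mul_assoc, pow_mul_qchoose_third]
      ring)
    h0 (by rwa [show (4 * 27 : ZMod p) = 108 by norm_num])

theorem sum_centralBinom_mul_G4_div_pow_ratCong (hp3 : 3 < p) {m : ℚ} (hm : IsPInt p m)
    (h0 : (m : ZMod p) ≠ 0) (h256 : (m : ZMod p) ≠ 256) :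
    RatCong p 1 (∑ k ∈ range p, ((2 * k).choose k : ℚ) * G4 k / m ^ k)
      ((qLegendre (m * (m - 256)) p : ℚ) *
        ∑ k ∈ range p,
          ((2 * k).choose k : ℚ) ^ 2 * ((4 * k).choose (2 * k) : ℚ) / (256 - m) ^ k) :=
  sum_centralBinom_mul_pow_mul_G_div_pow_ratCong (hp.out.odd_of_ne_two (by omega)) (.ofNat 64)
    (by exact_mod_cast natCast_two_pow_mul_three_pow_ne_zero hp3 6 0) (by norm_num) hm
    (HasResidue.one.neg.div (.ofNat 4)
      (by exact_mod_cast natCast_two_pow_mul_three_pow_ne_zero hp3 2 0)).1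
    (fun k => by
      rw [show (-1 - -1 / 4 : ℚ) = -3 / 4 by norm_num, mul_assoc, pow_mul_qchoose_quarter]
      ring)
    h0 (by rwa [show (4 * 64 : ZMod p) = 256 by norm_num])

theorem sum_centralBinom_mul_G6_div_pow_ratCong (hp3 : 3 < p) {m : ℚ} (hm : IsPInt p m)
    (h0 : (m : ZMod p) ≠ 0) (h1728 : (m : ZMod p) ≠ 1728) :
    RatCong p 1 (∑ k ∈ range p, ((2 * k).choose k : ℚ) * G6 k / m ^ k)
      ((qLegendre (m * (m - 1728)) p : ℚ) *
        ∑ k ∈ range p, ((2 * k).choose k : ℚ) * ((3 * k).choose k : ℚ) *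
          ((6 * k).choose (3 * k) : ℚ) / (1728 - m) ^ k) :=
  sum_centralBinom_mul_pow_mul_G_div_pow_ratCong (hp.out.odd_of_ne_two (by omega)) (.ofNat 432)
    (by exact_mod_cast natCast_two_pow_mul_three_pow_ne_zero hp3 4 3) (by norm_num) hm
    (HasResidue.one.neg.div (.ofNat 6)
      (by exact_mod_cast natCast_two_pow_mul_three_pow_ne_zero hp3 1 1)).1
    (fun k => by
      rw [show (-1 - -1 / 6 : ℚ) = -5 / 6 by norm_num, mul_assoc, pow_mul_qchoose_sixth]
      ring)
    h0 (by rwa [show (4 * 432 : ZMod p) = 1728 by norm_num])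

end ModP

theorem stmt_6 (p : ℕ) (hp : p.Prime) (hodd : Odd p) (m x : ℚ)
    (hm : IsPInt p m) (hx : IsPInt p x) :
    (¬ RatCong p 1 m 0 → ¬ RatCong p 1 m 1 →
      RatCong p 1 (∑ k ∈ range p, G k x / m ^ k)
        (∑ k ∈ range p, qchoose x k * qchoose (-1 - x) k / (1 - m) ^ k)) ∧
    (¬ RatCong p 1 m 2 → ¬ RatCong p 1 m (-2) →
      RatCong p 1 (∑ k ∈ range p, ((2 * k).choose k : ℚ) * G k x / (m + 2) ^ k)
        ((qLegendre ((m + 2) * (m - 2)) p : ℚ) *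
          ∑ k ∈ range p,
            ((2 * k).choose k : ℚ) * qchoose x k * qchoose (-1 - x) k / (2 - m) ^ k)) ∧
    (3 < p →
      (¬ RatCong p 1 m 0 → ¬ RatCong p 1 m 27 →
        RatCong p 1 (∑ k ∈ range p, G3 k / m ^ k)
          (∑ k ∈ range p, ((2 * k).choose k : ℚ) * ((3 * k).choose k : ℚ) / (27 - m) ^ k)) ∧
      (¬ RatCong p 1 m 0 → ¬ RatCong p 1 m 64 →
        RatCong p 1 (∑ k ∈ range p, G4 k / m ^ k)
          (∑ k ∈ range p,
            ((2 * k).choose k : ℚ) * ((4 * k).choose (2 * k) : ℚ) / (64 - m) ^ k)) ∧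
      (¬ RatCong p 1 m 0 → ¬ RatCong p 1 m 432 →
        RatCong p 1 (∑ k ∈ range p, G6 k / m ^ k)
          (∑ k ∈ range p,
            ((3 * k).choose k : ℚ) * ((6 * k).choose (3 * k) : ℚ) / (432 - m) ^ k)) ∧
      (¬ RatCong p 1 m 0 → ¬ RatCong p 1 m 108 →
        RatCong p 1 (∑ k ∈ range p, ((2 * k).choose k : ℚ) * G3 k / m ^ k)
          ((qLegendre (m * (m - 108)) p : ℚ) *
            ∑ k ∈ range p,
              ((2 * k).choose k : ℚ) ^ 2 * ((3 * k).choose k : ℚ) / (108 - m) ^ k)) ∧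
      (¬ RatCong p 1 m 0 → ¬ RatCong p 1 m 256 →
        RatCong p 1 (∑ k ∈ range p, ((2 * k).choose k : ℚ) * G4 k / m ^ k)
          ((qLegendre (m * (m - 256)) p : ℚ) *
            ∑ k ∈ range p,
              ((2 * k).choose k : ℚ) ^ 2 * ((4 * k).choose (2 * k) : ℚ) / (256 - m) ^ k)) ∧
      (¬ RatCong p 1 m 0 → ¬ RatCong p 1 m 1728 →
        RatCong p 1 (∑ k ∈ range p, ((2 * k).choose k : ℚ) * G6 k / m ^ k)
          ((qLegendre (m * (m - 1728)) p : ℚ) *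
            ∑ k ∈ range p,
              ((2 * k).choose k : ℚ) * ((3 * k).choose k : ℚ) * ((6 * k).choose (3 * k) : ℚ) /
                (1728 - m) ^ k))) := by
  have : Fact p.Prime := ⟨hp⟩
  have hne : ∀ {c : ℚ} {γ : ZMod p}, HasResidue p c γ → ¬ RatCong p 1 m c →
      (m : ZMod p) ≠ γ :=
    fun hc => mt (ratCong_one_iff (.of_isPInt hm) hc).mpr
  refine ⟨fun h0 h1 => sum_G_div_pow_ratCong hm hx (hne .zero h0) (hne .one h1),
    fun h2 h2' => sum_centralBinom_mul_G_div_pow_ratCong hodd hm hx (hne (.ofNat 2) h2)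
      (hne (HasResidue.ofNat 2).neg h2'),
    fun hp3 => ⟨?_, ?_, ?_, ?_, ?_, ?_⟩⟩
  · exact fun h0 h => sum_G3_div_pow_ratCong hp3 hm (hne .zero h0) (hne (.ofNat 27) h)
  · exact fun h0 h => sum_G4_div_pow_ratCong hp3 hm (hne .zero h0) (hne (.ofNat 64) h)
  · exact fun h0 h => sum_G6_div_pow_ratCong hp3 hm (hne .zero h0) (hne (.ofNat 432) h)
  · exact fun h0 h =>
      sum_centralBinom_mul_G3_div_pow_ratCong hp3 hm (hne .zero h0) (hne (.ofNat 108) h)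
  · exact fun h0 h =>
      sum_centralBinom_mul_G4_div_pow_ratCong hp3 hm (hne .zero h0) (hne (.ofNat 256) h)
  · exact fun h0 h =>
      sum_centralBinom_mul_G6_div_pow_ratCong hp3 hm (hne .zero h0) (hne (.ofNat 1728) h)
end
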